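/- arXiv:1905.05977 — 2 statements merged into one kernel-verified Lean document; each statement's English description precedes it below -/
import Mathlib

section
/- Minimal rank-deficiency perturbation of a vector-augmented matrix: if M : Matrix (Fin n) (Fin m) ℝ has full row rank n, then the minimum Frobenius norm of a perturbation Δ such that M + Δ has rank < n equals the smallest singular value of M; equivalently, min { ‖Δ‖_F : rank(M+Δ) < n } = σ_min(M) = min over unit vectors v of ‖vᵀ M‖₂. -/
/-!
If a unit vector `u` lies in the left kernel of `M + Δ`, then `uᵀM = -uᵀΔ`, and Cauchy–Schwarz in
each column gives `‖uᵀM‖₂ ≤ ‖Δ‖_F`. Conversely, for a unit vector `v` the rank-one perturbation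
`Δ = -v (vᵀM)` puts `v` in the left kernel of `M + Δ` and has `‖Δ‖_F = ‖vᵀM‖₂`. So every element
of either set is bounded below by an element of the other, and the two infima agree.
-/

open Finset

namespace Matrix

variable {m n : Type*} [Fintype m]

theorem vecMul_sub_vecMulVec_vecMul {R : Type*} [CommRing R] (v : m → R) (A : Matrix m n R) :
    v ᵥ* (A - vecMulVec v (v ᵥ* A)) = (1 - ∑ i, v i ^ 2) • (v ᵥ* A) := by
  rw [vecMul_sub, vecMul_vecMulVec, sub_smul, one_smul, dotProduct]
  simp only [sq]

variable [Fintype n]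

theorem rank_lt_card_height_iff_exists_vecMul_eq_zero {K : Type*} [Field K] (A : Matrix m n K) :
    A.rank < Fintype.card m ↔ ∃ v ≠ 0, v ᵥ* A = 0 := by
  have hrank : A.rank ≠ Fintype.card m ↔ ¬ LinearIndependent K A.row := by
    rw [A.rank_eq_finrank_span_row, linearIndependent_iff_card_eq_finrank_span, Set.finrank, ne_comm]
  rw [A.rank_le_card_height.lt_iff_ne, hrank, ← vecMul_injective_iff, ← coe_vecMulLinear,
    injective_iff_map_eq_zero]
  simp only [vecMulLinear_apply, not_forall, exists_prop, and_comm]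

theorem sum_vecMul_sq_le {R : Type*} [CommRing R] [LinearOrder R] [IsStrictOrderedRing R]
    (u : m → R) (A : Matrix m n R) :
    ∑ j, (u ᵥ* A) j ^ 2 ≤ (∑ i, u i ^ 2) * ∑ i, ∑ j, A i j ^ 2 := by
  rw [sum_comm (f := fun i j => A i j ^ 2), mul_sum]
  exact sum_le_sum fun j _ => sum_mul_sq_le_sq_mul_sq _ u (fun i => A i j)

theorem sum_vecMulVec_sq {R : Type*} [CommSemiring R] (v : m → R) (w : n → R) :
    ∑ i, ∑ j, vecMulVec v w i j ^ 2 = (∑ i, v i ^ 2) * ∑ j, w j ^ 2 := by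
  simp only [vecMulVec_apply, mul_pow, sum_mul_sum]

theorem exists_sum_sq_eq_one_vecMul_eq_zero_of_rank_lt (A : Matrix m n ℝ)
    (h : A.rank < Fintype.card m) : ∃ u : m → ℝ, ∑ i, u i ^ 2 = 1 ∧ u ᵥ* A = 0 := by
  obtain ⟨v, hv, hvA⟩ := A.rank_lt_card_height_iff_exists_vecMul_eq_zero.mp h
  have hpos : 0 < ∑ i, v i ^ 2 := by
    obtain ⟨i, hi⟩ := Function.ne_iff.mp hv
    exact sum_pos' (fun i _ => sq_nonneg (v i)) ⟨i, mem_univ i, sq_pos_of_ne_zero hi⟩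
  refine ⟨(√(∑ i, v i ^ 2))⁻¹ • v, ?_, by rw [smul_vecMul, hvA, smul_zero]⟩
  simp only [Pi.smul_apply, smul_eq_mul, mul_pow, ← mul_sum, inv_pow, Real.sq_sqrt hpos.le]
  exact inv_mul_cancel₀ hpos.ne'

theorem exists_sum_sq_eq_one_vecMul_sq_le_of_rank_add_lt (A Δ : Matrix m n ℝ)
    (h : (A + Δ).rank < Fintype.card m) :
    ∃ u : m → ℝ, ∑ i, u i ^ 2 = 1 ∧ ∑ j, (u ᵥ* A) j ^ 2 ≤ ∑ i, ∑ j, Δ i j ^ 2 := by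
  obtain ⟨u, hu, huAΔ⟩ := exists_sum_sq_eq_one_vecMul_eq_zero_of_rank_lt _ h
  have huA : u ᵥ* A = -(u ᵥ* Δ) := by
    rwa [vecMul_add, add_eq_zero_iff_eq_neg] at huAΔ
  refine ⟨u, hu, ?_⟩
  calc ∑ j, (u ᵥ* A) j ^ 2 = ∑ j, (u ᵥ* Δ) j ^ 2 := by simp only [huA, Pi.neg_apply, neg_sq]
    _ ≤ (∑ i, u i ^ 2) * ∑ i, ∑ j, Δ i j ^ 2 := sum_vecMul_sq_le u Δ
    _ = ∑ i, ∑ j, Δ i j ^ 2 := by rw [hu, one_mul]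

theorem rank_sub_vecMulVec_vecMul_lt {K : Type*} [Field K] (A : Matrix m n K) {v : m → K}
    (hv : ∑ i, v i ^ 2 = 1) : (A - vecMulVec v (v ᵥ* A)).rank < Fintype.card m := by
  refine (rank_lt_card_height_iff_exists_vecMul_eq_zero _).mpr ⟨v, ?_, ?_⟩
  · rintro rfl
    simp at hv
  · rw [vecMul_sub_vecMulVec_vecMul, hv, sub_self, zero_smul]

end Matrix

open Matrix

theorem min_perturbation_eq_smallest_singular_value_general (n m : ℕ)
    (M : Matrix (Fin n) (Fin m) ℝ) :
    sInf {x : ℝ | ∃ Δ : Matrix (Fin n) (Fin m) ℝ,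
        (M + Δ).rank < n ∧ x = Real.sqrt (∑ i, ∑ j, Δ i j ^ 2)} =
    sInf {x : ℝ | ∃ v : Fin n → ℝ, Real.sqrt (∑ i, v i ^ 2) = 1 ∧
        x = Real.sqrt (∑ j, (Matrix.vecMul v M j) ^ 2)} := by
  apply csInf_eq_csInf_of_forall_exists_le
  · rintro _ ⟨Δ, hrank, rfl⟩
    obtain ⟨u, hu, hle⟩ :=
      exists_sum_sq_eq_one_vecMul_sq_le_of_rank_add_lt M Δ (by rwa [Fintype.card_fin])
    exact ⟨_, ⟨u, by rw [hu, Real.sqrt_one], rfl⟩, Real.sqrt_le_sqrt hle⟩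
  · rintro _ ⟨v, hv, rfl⟩
    rw [Real.sqrt_eq_one] at hv
    refine ⟨_, ⟨-vecMulVec v (v ᵥ* M), ?_, rfl⟩, le_of_eq ?_⟩
    · simpa only [← sub_eq_add_neg, Fintype.card_fin] using rank_sub_vecMulVec_vecMul_lt M hv
    · simp only [Matrix.neg_apply, neg_sq, sum_vecMulVec_sq, hv, one_mul]

/-- The minimal Frobenius-norm rank-deficiency perturbation of a full-row-rank
matrix equals the smallest singular value `min_{‖v‖=1} ‖vᵀM‖₂`. -/
theorem min_perturbation_eq_smallest_singular_value (n m : ℕ) (hnm : n ≤ m)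
    (M : Matrix (Fin n) (Fin m) ℝ) (hM : M.rank = n) :
    sInf {x : ℝ | ∃ Δ : Matrix (Fin n) (Fin m) ℝ,
        (M + Δ).rank < n ∧ x = Real.sqrt (∑ i, ∑ j, Δ i j ^ 2)} =
    sInf {x : ℝ | ∃ v : Fin n → ℝ, Real.sqrt (∑ i, v i ^ 2) = 1 ∧
        x = Real.sqrt (∑ j, (Matrix.vecMul v M j) ^ 2)} :=
  min_perturbation_eq_smallest_singular_value_general n m M
end

section
/- Scaling a single entry to zero is the minimal Frobenius perturbation to create a common left-kernel when the remaining structure forces it: if E = diag(c₁, …, c_k, 0, …) is diagonal with exactly the entries c₁,…,c_k nonzero in rows 1..k and B is supported only on rows outside 1..k, then the minimum Frobenius norm perturbation Δ of the diagonal entries of E making rank [E+Δ_E, B] < n (n = number of rows) is min_i |c_i|, achieved by zeroing the smallest-magnitude c_i. -/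
/-! Perturbing only the leading diagonal entries `c` keeps the block structure of `[E + Δ_E, B]`:
each of the first `k` rows is the only row meeting its own pivot column, where its entry is
`c i + δ i`, and the last `n - k` rows do not change. So the matrix loses rank exactly when some
`c i + δ i` vanishes (its row is then zero, as `B` vanishes there), and the problem becomes the
Euclidean distance from `c` to the union of the coordinate hyperplanes, which is `min_i |c i|`. -/

section

open Matrix Finset

theorem isLeast_sqrt_sum_sq_of_exists_add_eq_zero {ι : Type*} [Fintype ι] [DecidableEq ι]
    (c : ι → ℝ) (hne : (univ : Finset ι).Nonempty) :
    IsLeast {x : ℝ | ∃ δ : ι → ℝ, (∃ i, c i + δ i = 0) ∧ x = √(∑ i, δ i ^ 2)}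
      (univ.inf' hne fun i => |c i|) := by
  obtain ⟨i₀, -, hi₀⟩ := exists_mem_eq_inf' hne fun i => |c i|
  refine ⟨⟨Pi.single i₀ (-c i₀), ⟨i₀, by simp⟩, ?_⟩, ?_⟩
  · rw [hi₀, ← Real.sqrt_sq_eq_abs]
    congr 1
    rw [Fintype.sum_eq_single i₀ fun i hi => by simp [hi]]
    simp
  · rintro _ ⟨δ, ⟨i, hi⟩, rfl⟩
    calc univ.inf' hne (fun i => |c i|) ≤ |c i| := inf'_le _ (mem_univ i)
      _ = √(δ i ^ 2) := by rw [Real.sqrt_sq_eq_abs, eq_neg_of_add_eq_zero_left hi, abs_neg]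
      _ ≤ √(∑ j, δ j ^ 2) :=
        Real.sqrt_le_sqrt (single_le_sum (fun j _ => sq_nonneg (δ j)) (mem_univ i))

theorem Matrix.linearIndependent_row_iff_rank_eq_card {m n K : Type*} [Fintype m] [Fintype n]
    [Field K] (A : Matrix m n K) : LinearIndependent K A.row ↔ A.rank = Fintype.card m := by
  rw [rank_eq_finrank_span_row, linearIndependent_iff_card_eq_finrank_span, Set.finrank, eq_comm]

theorem Matrix.rank_lt_card_height_of_row_eq_zero {m n R : Type*} [Fintype m] [DecidableEq m]
    [Fintype n] [CommSemiring R] [StrongRankCondition R] (A : Matrix m n R) {i : m} (hi : A i = 0) :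
    A.rank < Fintype.card m := by
  have hsupp : Function.support A.row ⊆ ↑(univ.erase i) := fun j hj =>
    mem_coe.2 (mem_erase.2 ⟨by rintro rfl; exact hj hi, mem_univ j⟩)
  calc A.rank ≤ (univ.erase i).card := A.rank_le_card_of_support_subset _ hsupp
    _ < Fintype.card m := card_erase_lt_of_mem (mem_univ i)

theorem linearIndependent_sum_of_pivots {α β κ K : Type*} [Fintype α] [Fintype β] [Field K]
    {v : α ⊕ β → κ → K} (p : α → κ) (hpiv : ∀ a, v (.inl a) (p a) ≠ 0)
    (hoff : ∀ i a, i ≠ .inl a → v i (p a) = 0) (hinr : LinearIndependent K (v ∘ .inr)) :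
    LinearIndependent K v := by
  rw [Fintype.linearIndependent_iff] at hinr ⊢
  intro g hg
  have hg_inl : ∀ a, g (.inl a) = 0 := fun a => by
    have hpa := congrFun hg (p a)
    simp only [Finset.sum_apply, Pi.smul_apply, smul_eq_mul, Pi.zero_apply] at hpa
    rw [Fintype.sum_eq_single (.inl a) fun i hi => by rw [hoff i a hi, mul_zero]] at hpa
    exact (mul_eq_zero.mp hpa).resolve_right (hpiv a)
  have hg_inr : ∀ b, g (.inr b) = 0 :=
    hinr (g ∘ .inr) (by simpa [Fintype.sum_sum_type, hg_inl] using hg)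
  rintro (a | b)
  exacts [hg_inl a, hg_inr b]

variable {n k : ℕ} {R : Type*}

def leadingDiagonal (n : ℕ) [Zero R] (d : Fin k → R) : Matrix (Fin n) (Fin n) R :=
  diagonal fun i => if h : (i : ℕ) < k then d ⟨i, h⟩ else 0

theorem leadingDiagonal_add [AddZeroClass R] (c δ : Fin k → R) :
    leadingDiagonal n c + leadingDiagonal n δ = leadingDiagonal n (c + δ) := by
  rw [leadingDiagonal, leadingDiagonal, diagonal_add, leadingDiagonal]
  congr 1
  ext i
  split_ifs <;> simp

theorem leadingDiagonal_row_of_le [Zero R] (d : Fin k → R) {i : Fin n} (hi : k ≤ i) :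
    leadingDiagonal n d i = 0 := by
  ext j
  simp [leadingDiagonal, diagonal_apply, Nat.not_lt.mpr hi]

def leadingSplit (hkn : k ≤ n) : Fin k ⊕ Fin (n - k) ≃ Fin n :=
  finSumFinEquiv.trans (finCongr (Nat.add_sub_cancel' hkn))

@[simp]
theorem leadingSplit_inl (hkn : k ≤ n) (a : Fin k) :
    leadingSplit hkn (.inl a) = Fin.castLE hkn a :=
  Fin.ext (by simp [leadingSplit])

@[simp]
theorem leadingSplit_inr (hkn : k ≤ n) (t : Fin (n - k)) :
    (leadingSplit hkn (.inr t) : ℕ) = k + t := by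
  simp [leadingSplit]

variable {m K : Type*} [Field K]

theorem fromCols_leadingDiagonal_row_of_le (d : Fin k → K) (B : Matrix (Fin n) m K) {i : Fin n}
    (hi : k ≤ i) :
    fromCols (leadingDiagonal n d) B i = fromCols (0 : Matrix (Fin n) (Fin n) K) B i := by
  ext (j | j)
  · simp [leadingDiagonal_row_of_le d hi]
  · rfl

theorem linearIndependent_row_fromCols_leadingDiagonal (hkn : k ≤ n) {d : Fin k → K}
    (hd : ∀ i, d i ≠ 0) {B : Matrix (Fin n) m K}
    (hbot : LinearIndependent K fun t =>
      fromCols (0 : Matrix (Fin n) (Fin n) K) B (leadingSplit hkn (.inr t))) :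
    LinearIndependent K (fromCols (leadingDiagonal n d) B).row := by
  rw [← linearIndependent_equiv (leadingSplit hkn)]
  refine linearIndependent_sum_of_pivots (fun a => .inl (Fin.castLE hkn a)) (fun a => ?_)
    (fun i a hia => ?_) ?_
  · simpa [leadingDiagonal] using hd a
  · have hne : leadingSplit hkn i ≠ Fin.castLE hkn a := by
      rw [← leadingSplit_inl hkn a]
      exact (leadingSplit hkn).injective.ne hia
    simp [leadingDiagonal, diagonal_apply_ne _ hne]
  · convert hbot using 2 with t
    exact fromCols_leadingDiagonal_row_of_le d B (by simp)

theorem rank_fromCols_leadingDiagonal_lt_iff [Fintype m] (hkn : k ≤ n) (d : Fin k → K)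
    {B : Matrix (Fin n) m K} (hB : ∀ (i : Fin n), (i : ℕ) < k → ∀ j, B i j = 0)
    (hbot : LinearIndependent K fun t =>
      fromCols (0 : Matrix (Fin n) (Fin n) K) B (leadingSplit hkn (.inr t))) :
    (fromCols (leadingDiagonal n d) B).rank < n ↔ ∃ i, d i = 0 := by
  constructor
  · intro hlt
    by_contra! hd
    have hrank := (linearIndependent_row_fromCols_leadingDiagonal hkn hd hbot).rank_matrix
    rw [Fintype.card_fin] at hrank
    exact hlt.ne hrank
  · rintro ⟨i, hi⟩
    have hrow : fromCols (leadingDiagonal n d) B (Fin.castLE hkn i) = 0 := by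
      ext (j | j)
      · by_cases hij : Fin.castLE hkn i = j
        · subst hij
          simp [leadingDiagonal, hi]
        · simp [leadingDiagonal, diagonal_apply_ne _ hij]
      · exact hB _ i.2 j
    simpa using rank_lt_card_height_of_row_eq_zero _ hrow

end

/-- If `E` is diagonal with nonzero entries `c₀,…,c_{k-1}` in the first `k`
rows and zeros afterwards, `B` vanishes on the first `k` rows, and the last
`n - k` rows of `[E B]` have full rank `n - k`, then the minimal Frobenius norm
of a structured perturbation `δ` of the first `k` diagonal entries of `E`
making `[E + Δ_E(δ), B]` rank deficient is `min_i |c i|`. -/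
theorem min_structured_perturbation_is_smallest_entry (n m k : ℕ)
    (hk : 0 < k) (hkn : k ≤ n) (c : Fin k → ℝ)
    (E : Matrix (Fin n) (Fin n) ℝ) (B : Matrix (Fin n) (Fin m) ℝ)
    (hE : E = Matrix.diagonal (fun i : Fin n =>
      if h : (i : ℕ) < k then c ⟨i, h⟩ else 0))
    (hB : ∀ (i : Fin n), (i : ℕ) < k → ∀ j, B i j = 0)
    (hbot : (Matrix.of fun (i : Fin (n - k)) (j : Fin n ⊕ Fin m) =>
        Matrix.fromCols E B ⟨k + (i : ℕ), by omega⟩ j).rank = n - k) :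
    IsLeast {x : ℝ | ∃ δ : Fin k → ℝ,
        (Matrix.fromCols
          (E + Matrix.diagonal (fun i : Fin n =>
            if h : (i : ℕ) < k then δ ⟨i, h⟩ else 0)) B).rank < n ∧
        x = Real.sqrt (∑ i, δ i ^ 2)}
      (Finset.univ.inf' (by simp [Finset.univ_nonempty_iff, Fin.pos_iff_nonempty.mp hk])
        fun i => |c i|) := by
  subst hE
  have hbot' : LinearIndependent ℝ fun t =>
      Matrix.fromCols (0 : Matrix (Fin n) (Fin n) ℝ) B (leadingSplit hkn (.inr t)) := by
    have hrows := (Matrix.linearIndependent_row_iff_rank_eq_card _).2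
      (hbot.trans (Fintype.card_fin _).symm)
    convert hrows using 2 with t
    · exact (fromCols_leadingDiagonal_row_of_le c B (by simp)).symm
    · rfl
  have hrank (δ : Fin k → ℝ) :
      (Matrix.fromCols (leadingDiagonal n c + leadingDiagonal n δ) B).rank < n ↔
        ∃ i, c i + δ i = 0 := by
    rw [leadingDiagonal_add, rank_fromCols_leadingDiagonal_lt_iff hkn _ hB hbot']
    simp only [Pi.add_apply]
  simp only [leadingDiagonal] at hrank
  simp_rw [hrank]
  exact isLeast_sqrt_sum_sq_of_exists_add_eq_zero c _
end
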